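/- Let n > 2 and fix M ∈ ℂ with M ≠ 0 and M ≠ 1. Define the holomorphic matrix T_n(z) ∈ M_n(ℂ) as the block-diagonal matrix with upper-left block M·I_{n−2} and lower-right block [[exp(z), 1], [0, 1]]. Then there is no holomorphic mapping S : ℂ → M_n(ℂ) such that S(z)·S(z) = T_n(z) for all z ∈ ℂ. -/

import Mathlib

/-!
A square root `S` commutes with `T = S * S`. Comparing the lower-left blocks of `S * T` and
`T * S` shows that the lower-left block `C` of `S` satisfies `J * C = M • C` for the lower-right
block `J = !![exp z, 1; 0, 1]` of `T`; as `M ≠ 1` and `exp z ≠ M` off a discrete set, continuity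
forces `C = 0`. Then the lower-right block `!![a, b; c, d]` of `S` is a continuous square root
of `J`. From `b * (a + d) = 1` we get `c = 0`, hence `d ^ 2 = 1` and `a ^ 2 = exp z`. So `d` is
constant while `a` changes sign from `0` to `2πi`, and `a + d` vanishes at one of these points.
-/

open Complex Matrix Filter Topology
open scoped Real

theorem apply_eq_zero_of_forall_mul_eq_zero {𝕜 : Type*} [NontriviallyNormedField 𝕜]
    {f g : 𝕜 → 𝕜} {g' x : 𝕜} (hf : ContinuousAt f x) (hg : HasDerivAt g g' x) (hg' : g' ≠ 0)
    (h : ∀ z, g z * f z = 0) : f x = 0 := by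
  have hf0 : f =ᶠ[𝓝[≠] x] fun _ => 0 :=
    (hg.eventually_ne (c := 0) hg').mono fun z hz => (mul_eq_zero.mp (h z)).resolve_left hz
  exact tendsto_nhds_unique (hf.tendsto.mono_left nhdsWithin_le_nhds)
    (tendsto_const_nhds.congr' hf0.symm)

theorem PreconnectedSpace.eq_of_mul_self_eq_one {X R : Type*} [TopologicalSpace X]
    [PreconnectedSpace X] [Ring R] [NoZeroDivisors R] [TopologicalSpace R] [T1Space R]
    {u : X → R} (hu : Continuous u) (h : ∀ x, u x * u x = 1) (x y : X) : u x = u y :=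
  isPreconnected_univ.constant_of_mapsTo (T := {1, -1}) (Set.toFinite _).isDiscrete
    hu.continuousOn (fun x _ => mul_self_eq_one_iff.mp (h x)) trivial trivial

theorem apply_two_pi_I_eq_neg_of_mul_self_eq_exp {a : ℂ → ℂ} (ha : Continuous a)
    (h : ∀ z, a z * a z = exp z) : a (2 * π * I) = -a 0 := by
  have hu (z : ℂ) : a z * exp (-z / 2) * (a z * exp (-z / 2)) = 1 := by
    rw [mul_mul_mul_comm, h, ← exp_add, ← exp_add]
    ring_nf
    exact exp_zero
  have := PreconnectedSpace.eq_of_mul_self_eq_one (by fun_prop) hu (2 * π * I) 0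
  rw [show -(2 * π * I) / 2 = -(π * I) by ring, exp_neg, exp_pi_mul_I] at this
  simpa [neg_eq_iff_eq_neg] using this

theorem false_of_entries_mul_self_eq_triangular_exp {a b c d : ℂ → ℂ} (ha : Continuous a)
    (hd : Continuous d) (h₀₀ : ∀ z, a z * a z + b z * c z = exp z)
    (h₀₁ : ∀ z, a z * b z + b z * d z = 1) (h₁₀ : ∀ z, c z * a z + d z * c z = 0)
    (h₁₁ : ∀ z, c z * b z + d z * d z = 1) : False := by
  have htrace (z : ℂ) : a z + d z ≠ 0 := fun h0 =>
    one_ne_zero (by linear_combination -(h₀₁ z) + b z * h0)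
  have hc (z : ℂ) : c z = 0 :=
    (mul_eq_zero.mp (by linear_combination h₁₀ z : c z * (a z + d z) = 0)).resolve_right
      (htrace z)
  have ha2 (z : ℂ) : a z * a z = exp z := by simpa [hc] using h₀₀ z
  have hd2 (z : ℂ) : d z * d z = 1 := by simpa [hc] using h₁₁ z
  have hd_const := PreconnectedSpace.eq_of_mul_self_eq_one hd hd2 (2 * π * I) 0
  have ha_anti := apply_two_pi_I_eq_neg_of_mul_self_eq_exp ha ha2
  have h0 : (a 0 - d 0) * (a 0 + d 0) = 0 := by
    linear_combination ha2 0 - hd2 0 + exp_zero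
  refine htrace (2 * π * I) ?_
  rw [ha_anti, hd_const]
  linear_combination -(mul_eq_zero.mp h0).resolve_right (htrace 0)

theorem not_exists_continuous_sqrt_triangular_exp :
    ¬ ∃ D : ℂ → Matrix (Fin 2) (Fin 2) ℂ, Continuous D ∧ ∀ z, D z * D z = !![exp z, 1; 0, 1] := by
  rintro ⟨D, hD, hsq⟩
  have entries (z : ℂ) := hsq z
  simp only [← Matrix.ext_iff, Fin.forall_fin_two, mul_apply, Fin.sum_univ_two, Fin.isValue,
    of_apply, cons_val', cons_val_zero, cons_val_fin_one, cons_val_one] at entries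
  exact false_of_entries_mul_self_eq_triangular_exp (hD.matrix_elem 0 0) (hD.matrix_elem 1 1)
    (fun z => (entries z).1.1) (fun z => (entries z).1.2) (fun z => (entries z).2.1)
    (fun z => (entries z).2.2)

theorem eq_zero_of_triangular_exp_mul_eq_smul {m : Type*} {C : ℂ → Matrix (Fin 2) m ℂ}
    {M : ℂ} (hM1 : M ≠ 1) (hC : Continuous C) (h : ∀ z, !![exp z, 1; 0, 1] * C z = M • C z)
    (z : ℂ) : C z = 0 := by
  have rows (w : ℂ) := congrFun₂ (h w)
  simp only [mul_apply, of_apply, cons_val', cons_val_fin_one, Fin.sum_univ_two, Fin.isValue,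
    cons_val_zero, cons_val_one, Matrix.smul_apply, smul_eq_mul, Fin.forall_fin_two, one_mul, zero_mul,
    zero_add] at rows
  have row₁ (w : ℂ) (k : m) : C w 1 k = 0 :=
    (mul_eq_zero.mp (by linear_combination (rows w).2 k : C w 1 k * (1 - M) = 0)).resolve_right
      (sub_ne_zero.mpr hM1.symm)
  have row₀ (k : m) : C z 0 k = 0 :=
    apply_eq_zero_of_forall_mul_eq_zero (g := fun w => exp w - M)
      (hC.matrix_elem 0 k).continuousAt ((hasDerivAt_exp z).sub_const M) (exp_ne_zero z)
      fun w => by linear_combination (rows w).1 k - row₁ w k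
  ext i k
  fin_cases i
  · exact row₀ k
  · exact row₁ z k

theorem Matrix.mul_toBlocks₂₁_of_commute_fromBlocks {l m R : Type*} [Fintype l] [Fintype m]
    [Semiring R] {X : Matrix (l ⊕ m) (l ⊕ m) R} {A : Matrix l l R} {D : Matrix m m R}
    (h : Commute X (fromBlocks A 0 0 D)) : D * X.toBlocks₂₁ = X.toBlocks₂₁ * A := by
  have := congrArg toBlocks₂₁ h.eq
  rw [← fromBlocks_toBlocks X] at this
  simpa [fromBlocks_multiply] using this.symm

theorem Matrix.toBlocks₂₂_mul_self_of_toBlocks₂₁_eq_zero {l m R : Type*} [Fintype l] [Fintype m]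
    [Semiring R] {X : Matrix (l ⊕ m) (l ⊕ m) R} (h : X.toBlocks₂₁ = 0) :
    (X * X).toBlocks₂₂ = X.toBlocks₂₂ * X.toBlocks₂₂ := by
  conv_lhs => rw [← fromBlocks_toBlocks X, h]
  simp [fromBlocks_multiply]

theorem stmt7_general (n : ℕ) (M : ℂ) (hM1 : M ≠ 1) :
    ¬ ∃ S : ℂ → Matrix (Fin (n - 2) ⊕ Fin 2) (Fin (n - 2) ⊕ Fin 2) ℂ,
      (∀ i j : Fin (n - 2) ⊕ Fin 2, Differentiable ℂ fun z => S z i j) ∧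
      (∀ z : ℂ, S z * S z =
        Matrix.fromBlocks (M • (1 : Matrix (Fin (n - 2)) (Fin (n - 2)) ℂ)) 0 0
          !![Complex.exp z, 1; 0, 1]) := by
  rintro ⟨S, hS, hsq⟩
  have hSc : Continuous S := continuous_pi fun i => continuous_pi fun j => (hS i j).continuous
  have hlower (z : ℂ) : (S z).toBlocks₂₁ = 0 := by
    refine eq_zero_of_triangular_exp_mul_eq_smul (C := fun z => (S z).toBlocks₂₁) hM1
      (continuous_pi fun i => continuous_pi fun j => hSc.matrix_elem _ _) (fun w => ?_) z
    have hcomm : Commute (S w) (S w * S w) := (Commute.refl _).mul_right (Commute.refl _)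
    rw [hsq w] at hcomm
    rw [mul_toBlocks₂₁_of_commute_fromBlocks hcomm, Matrix.mul_smul, Matrix.mul_one]
  refine not_exists_continuous_sqrt_triangular_exp ⟨fun z => (S z).toBlocks₂₂,
    continuous_pi fun i => continuous_pi fun j => hSc.matrix_elem _ _, fun z => ?_⟩
  rw [← toBlocks₂₂_mul_self_of_toBlocks₂₁_eq_zero (hlower z), hsq z, toBlocks_fromBlocks₂₂]

/-- For `n > 2` and `M ∈ ℂ \ {0, 1}`, the holomorphic matrix
`T_n(z) = [[M·I_{n-2}, 0], [0, [[e^z, 1], [0, 1]]]]` has no holomorphic square root. -/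
theorem stmt7 (n : ℕ) (hn : 2 < n) (M : ℂ) (hM0 : M ≠ 0) (hM1 : M ≠ 1) :
    ¬ ∃ S : ℂ → Matrix (Fin (n - 2) ⊕ Fin 2) (Fin (n - 2) ⊕ Fin 2) ℂ,
      (∀ i j : Fin (n - 2) ⊕ Fin 2, Differentiable ℂ fun z => S z i j) ∧
      (∀ z : ℂ, S z * S z =
        Matrix.fromBlocks (M • (1 : Matrix (Fin (n - 2)) (Fin (n - 2)) ℂ)) 0 0
          !![Complex.exp z, 1; 0, 1]) :=
  stmt7_general n M hM1
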